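/- An object V of S is indecomposable (nonzero and not expressible as the direct sum of two nonzero subobjects) if and only if V ≅ S_{a,b} for some a ∈ ℤ ∪ {−∞} and b ∈ ℤ ∪ {∞} with a ≤ b; and V is completely decomposable (a coproduct of indecomposable objects) if and only if V is isomorphic to a coproduct of objects of the form S_{a,b}. -/

import Mathlib

open CategoryTheory CategoryTheory.Limits

set_option linter.unusedVariables false

/-- The category `S` of sequences of `k`-vector spaces: functors from `ℤ`
(viewed as a poset category) to `k`-vector spaces. -/
abbrev SeqCat (k : Type) [Field k] := ℤ ⥤ ModuleCat k

variable {k : Type} [Field k]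

/-- The transition map `d_V^i : V^i ⟶ V^{i+1}` of a sequence `V`. -/
noncomputable def SeqCat.d (V : SeqCat k) (i : ℤ) : V.obj i ⟶ V.obj (i + 1) :=
  V.map (homOfLE (by omega))

variable (k)

/-- The component in degree `i` of the sequence `S_{a,b}` (for `a ∈ ℤ ∪ {−∞}`,
`b ∈ ℤ ∪ {∞}`), as a submodule of `k`: it is all of `k` if `a ≤ i ≤ b` and `0`
otherwise. -/
noncomputable def SabObj (a : WithBot ℤ) (b : WithTop ℤ) (i : ℤ) : Submodule k k :=
  if a ≤ (i : WithBot ℤ) ∧ (i : WithTop ℤ) ≤ b then ⊤ else ⊥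

lemma SabObj_coe_eq_zero {a : WithBot ℤ} {b : WithTop ℤ} {i : ℤ}
    (h : ¬ (a ≤ (i : WithBot ℤ) ∧ (i : WithTop ℤ) ≤ b)) (x : ↥(SabObj k a b i)) :
    (x : k) = 0 := by
  have hm := x.2
  have he : SabObj k a b i = ⊥ := if_neg h
  exact (Submodule.eq_bot_iff _).1 he _ hm

/-- The transition maps of the sequence `S_{a,b}`: the map from degree `i` to degree `j`
is multiplication by `∏_{m=i}^{j-1} (-1)^m`, i.e. the composite of the maps
`(-1)^m · id` for `i ≤ m < j` (and it is zero when forced to be, i.e. when the target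
component vanishes). -/
noncomputable def SabMap (a : WithBot ℤ) (b : WithTop ℤ) (i j : ℤ) :
    ↥(SabObj k a b i) →ₗ[k] ↥(SabObj k a b j) where
  toFun x := if h : a ≤ (j : WithBot ℤ) ∧ (j : WithTop ℤ) ≤ b then
      ⟨(∏ m ∈ Finset.Ico i j, (-1 : k) ^ m) * (x : k), by
        rw [SabObj, if_pos h]; trivial⟩
    else 0
  map_add' x y := by
    by_cases h : a ≤ (j : WithBot ℤ) ∧ (j : WithTop ℤ) ≤ b
    · simp only [dif_pos h]
      ext
      push_cast
      ring
    · simp only [dif_neg h, add_zero]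
  map_smul' c x := by
    by_cases h : a ≤ (j : WithBot ℤ) ∧ (j : WithTop ℤ) ≤ b
    · simp only [dif_pos h, RingHom.id_apply]
      ext
      simp [smul_eq_mul]
      ring
    · simp only [dif_neg h, smul_zero, RingHom.id_apply]

lemma SabMap_id (a : WithBot ℤ) (b : WithTop ℤ) (i : ℤ) :
    SabMap k a b i i = LinearMap.id := by
  apply LinearMap.ext
  intro x
  by_cases h : a ≤ (i : WithBot ℤ) ∧ (i : WithTop ℤ) ≤ b
  · apply Subtype.ext
    simp [SabMap, h]
  · apply Subtype.ext
    simp [SabMap, h, SabObj_coe_eq_zero k h x]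

lemma SabMap_comp (a : WithBot ℤ) (b : WithTop ℤ) {i j l : ℤ}
    (hij : i ≤ j) (hjl : j ≤ l) :
    (SabMap k a b j l).comp (SabMap k a b i j) = SabMap k a b i l := by
  apply LinearMap.ext
  intro x
  by_cases hl : a ≤ (l : WithBot ℤ) ∧ (l : WithTop ℤ) ≤ b
  · by_cases hj : a ≤ (j : WithBot ℤ) ∧ (j : WithTop ℤ) ≤ b
    · apply Subtype.ext
      simp only [LinearMap.comp_apply, SabMap, LinearMap.coe_mk, AddHom.coe_mk,
        dif_pos hl, dif_pos hj]
      have key : (∏ m ∈ Finset.Ico i j, (-1 : k) ^ m) * (∏ m ∈ Finset.Ico j l, (-1 : k) ^ m)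
          = ∏ m ∈ Finset.Ico i l, (-1 : k) ^ m := by
        rw [← Finset.prod_union (Finset.Ico_disjoint_Ico_consecutive i j l),
          Finset.Ico_union_Ico_eq_Ico hij hjl]
      rw [← key]
      ring
    · have hi : ¬ (a ≤ (i : WithBot ℤ) ∧ (i : WithTop ℤ) ≤ b) := by
        intro hi
        exact hj ⟨le_trans hi.1 (by exact_mod_cast hij),
          le_trans (by exact_mod_cast hjl) hl.2⟩
      apply Subtype.ext
      simp [SabMap, hl, hj, SabObj_coe_eq_zero k hi x]
  · apply Subtype.ext
    simp [SabMap, hl]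

/-- The sequence `S_{a,b}` for `a ∈ ℤ ∪ {−∞}` and `b ∈ ℤ ∪ {∞}`: its component in
degree `i` is `k` for `a ≤ i ≤ b` and `0` otherwise, and the transition map in degree
`i` (within the interval) is `(-1)^i · id_k`. -/
noncomputable def Sab (a : WithBot ℤ) (b : WithTop ℤ) : SeqCat k where
  obj i := ModuleCat.of k (SabObj k a b i)
  map {i j} f := ModuleCat.ofHom (SabMap k a b i j)
  map_id i := by
    ext1
    simp only [ModuleCat.hom_ofHom, ModuleCat.hom_id]
    exact SabMap_id k a b i
  map_comp {i j l} f g := by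
    ext1
    simp only [ModuleCat.hom_comp, ModuleCat.hom_ofHom]
    exact (SabMap_comp k a b (leOfHom f) (leOfHom g)).symm

/-- The condition `a ≤ b` for `a ∈ ℤ ∪ {−∞}` and `b ∈ ℤ ∪ {∞}`: the interval `[a,b]`
contains some integer. -/
def SabLE (a : WithBot ℤ) (b : WithTop ℤ) : Prop :=
  ∃ i : ℤ, a ≤ (i : WithBot ℤ) ∧ (i : WithTop ℤ) ≤ b

/-- A nonzero object of an additive category is indecomposable if it is not (isomorphic
to) a coproduct of two non-zero objects. -/
def IndecomposableSeq (V : SeqCat k) : Prop :=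
  ¬ IsZero V ∧ ∀ A B : SeqCat k, Nonempty (V ≅ A ⨿ B) → IsZero A ∨ IsZero B

/-- An object is completely decomposable if it is (isomorphic to) a coproduct of
indecomposable objects. -/
def CompletelyDecomposableSeq (V : SeqCat k) : Prop :=
  ∃ (ι : Type) (W : ι → SeqCat k),
    (∀ j, IndecomposableSeq k (W j)) ∧ Nonempty (V ≅ ∐ W)

/-!
Every endomorphism of `S_{a,b}` is a scalar, because its transition maps are invertible on the
connected support; so `0` and `1` are its only idempotents and `S_{a,b}` is indecomposable.

Conversely, every nonzero `V` has a direct summand `S_{a,b}`. Such a summand is given by vectors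
`x_j ∈ V^j` on `[a,b]`, compatible with `d` and killed by `d` after `b`, together with compatible
functionals `λ_j` with `λ_j(x_j) = 1` that vanish on the image of `V^{a-1}`. There are three
cases:
* some `y ≠ 0` in `V^b` with `d y = 0` does not lift arbitrarily far back: let `a` be the first
  degree from which it lifts, and take `λ_b` vanishing on the image of `V^{a-1}`;
* every vector killed by `d` lifts arbitrarily far back: then the infinitely liftable vectors
  lift to infinitely liftable vectors, and a chain of lifts of one killed `y ≠ 0` gives `S_{-∞,b}`;
* all `d` are injective, so `V` is an increasing filtration of its direct limit: where the
  filtration jumps, at `a`, this gives `S_{a,∞}`; if it never jumps, this gives `S_{-∞,∞}`.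
An indecomposable `V` is then isomorphic to this summand, and complete decomposability is handled
one summand at a time.
-/

section Preadditive

variable {C : Type*} [Category C] [Preadditive C]

theorem nonempty_iso_coprod_cokernel_of_isSplitMono {X Y : C} (f : X ⟶ Y) [IsSplitMono f]
    [HasCokernel f] [HasBinaryCoproduct X (cokernel f)] : Nonempty (Y ≅ X ⨿ cokernel f) :=
  ⟨(isBilimitBinaryBiconeOfIsSplitMonoOfCokernel (cokernelIsCokernel f)).isColimit
    |>.coconePointUniqueUpToIso (colimit.isColimit (pair X (cokernel f)))⟩

theorem isZero_or_isZero_of_iso_biprod {X A B : C} [HasBinaryBiproduct A B]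
    (hX : ∀ e : X ⟶ X, e ≫ e = e → e = 0 ∨ e = 𝟙 X) (φ : X ≅ A ⊞ B) : IsZero A ∨ IsZero B := by
  set e := φ.hom ≫ biprod.fst ≫ biprod.inl ≫ φ.inv
  have he : e ≫ e = e := by simp [e]
  rcases hX e he with h | h
  · left
    rw [IsZero.iff_id_eq_zero]
    calc 𝟙 A = biprod.inl ≫ φ.inv ≫ e ≫ φ.hom ≫ biprod.fst := by simp [e]
      _ = 0 := by simp [h]
  · right
    rw [IsZero.iff_id_eq_zero]
    calc 𝟙 B = biprod.inr ≫ φ.inv ≫ e ≫ φ.hom ≫ biprod.snd := by simp [h]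
      _ = 0 := by simp [e]

end Preadditive

theorem LinearMap.exists_eq_one_and_eq_zero_of_notMem {K M : Type*} [Field K] [AddCommGroup M]
    [Module K M] {p : Submodule K M} {v : M} (hv : v ∉ p) :
    ∃ φ : M →ₗ[K] K, φ v = 1 ∧ ∀ w ∈ p, φ w = 0 := by
  obtain ⟨φ, hφ, hφv⟩ := LinearMap.exists_extend_of_notMem (0 : p →ₗ[K] K) hv 1
  exact ⟨φ, hφv, fun w hw => LinearMap.congr_fun hφ ⟨w, hw⟩⟩

namespace SeqCat

variable {k} (V W : SeqCat k)

theorem map_map_apply {i j l : ℤ} (hij : i ≤ j) (hjl : j ≤ l) (v : V.obj i) :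
    V.map (homOfLE hjl) (V.map (homOfLE hij) v) = V.map (homOfLE (hij.trans hjl)) v := by
  rw [← homOfLE_comp hij hjl, V.map_comp]
  rfl

theorem map_self_apply {i : ℤ} (h : i ≤ i) (v : V.obj i) : V.map (homOfLE h) v = v := by
  rw [show homOfLE h = 𝟙 i from rfl, V.map_id]
  rfl

theorem d_apply (i : ℤ) (v : V.obj i) : V.d i v = V.map (homOfLE (Int.le_add_one le_rfl)) v := rfl

variable {V W}

def homMk (app : ∀ i, V.obj i ⟶ W.obj i) (naturality : ∀ i, V.d i ≫ app (i + 1) = app i ≫ W.d i) :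
    V ⟶ W where
  app := app
  naturality i j f := by
    suffices ∀ h : i ≤ j, V.map (homOfLE h) ≫ app j = app i ≫ W.map (homOfLE h) from
      this (leOfHom f)
    clear f
    intro h
    induction j, h using Int.leInduction with
    | base => simp
    | succ j hij ih =>
      rw [← homOfLE_comp hij (Int.le_add_one le_rfl), V.map_comp, W.map_comp, Category.assoc,
        show V.map (homOfLE _) ≫ app (j + 1) = app j ≫ W.map (homOfLE _) from naturality j,
        reassoc_of% ih]

end SeqCat

namespace Sab

variable {k} {a : WithBot ℤ} {b : WithTop ℤ}

def support (a : WithBot ℤ) (b : WithTop ℤ) : Set ℤ :=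
  {i | a ≤ (i : WithBot ℤ) ∧ (i : WithTop ℤ) ≤ b}

noncomputable instance (i : ℤ) : Decidable (i ∈ support a b) :=
  inferInstanceAs (Decidable (_ ∧ _))

theorem mem_support_iff {j : ℤ} : j ∈ support a b ↔ a ≤ (j : WithBot ℤ) ∧ (j : WithTop ℤ) ≤ b :=
  Iff.rfl

theorem mem_support_of_le_of_le {i j m : ℤ} (hi : i ∈ support a b) (hj : j ∈ support a b)
    (him : i ≤ m) (hmj : m ≤ j) : m ∈ support a b :=
  ⟨hi.1.trans (by exact_mod_cast him), le_trans (by exact_mod_cast hmj) hj.2⟩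

noncomputable def coord (j : ℤ) : (Sab k a b).obj j →ₗ[k] k :=
  (SabObj k a b j).subtype

theorem coord_injective (j : ℤ) : Function.Injective (coord (k := k) (a := a) (b := b) j) :=
  Subtype.val_injective

theorem eq_zero_of_notMem {j : ℤ} (h : j ∉ support a b) (w : (Sab k a b).obj j) : w = 0 :=
  coord_injective j (SabObj_coe_eq_zero k h w)

noncomputable def mk {j : ℤ} (h : j ∈ support a b) : k →ₗ[k] (Sab k a b).obj j :=
  LinearMap.codRestrict (SabObj k a b j) LinearMap.id fun c => by
    rw [show SabObj k a b j = ⊤ from if_pos h]; trivial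

@[simp]
theorem coord_mk {j : ℤ} (h : j ∈ support a b) (c : k) : coord j (mk h c) = c := rfl

theorem coord_smul_mk_one {j : ℤ} (h : j ∈ support a b) (w : (Sab k a b).obj j) :
    coord j w • mk h 1 = w :=
  coord_injective j (mul_one _)

theorem mk_one_ne_zero {j : ℤ} (h : j ∈ support a b) : mk h (1 : k) ≠ 0 :=
  fun h0 => one_ne_zero (congrArg (coord j) h0)

theorem coord_d_of_mem {i : ℤ} (h : i + 1 ∈ support a b) (w : (Sab k a b).obj i) :
    coord (i + 1) ((Sab k a b).d i w) = (-1) ^ i * coord i w := by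
  have hIco : Finset.Ico i (i + 1) = {i} := by ext; simp; omega
  change ((SabMap k a b i (i + 1) w : SabObj k a b (i + 1)) : k) = _
  rw [SabMap, LinearMap.coe_mk, AddHom.coe_mk, dif_pos (show _ ∧ _ from h)]
  change (∏ m ∈ Finset.Ico i (i + 1), (-1 : k) ^ m) * coord i w = _
  rw [hIco, Finset.prod_singleton]

theorem d_eq_zero_of_notMem {i : ℤ} (h : i + 1 ∉ support a b) (w : (Sab k a b).obj i) :
    (Sab k a b).d i w = 0 :=
  eq_zero_of_notMem h _

theorem not_isZero (h : SabLE a b) : ¬ IsZero (Sab k a b) := by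
  obtain ⟨i, hi⟩ := h
  intro hz
  have : Subsingleton ((Sab k a b).obj i) :=
    ModuleCat.isZero_iff_subsingleton.1 ((Functor.isZero_iff _).1 hz i)
  exact mk_one_ne_zero (k := k) hi (Subsingleton.elim _ _)

theorem exists_app_eq_smul (h : SabLE a b) (f : Sab k a b ⟶ Sab k a b) :
    ∃ c : k, ∀ j (w : (Sab k a b).obj j), f.app j w = c • w := by
  let c : ℤ → k := fun j => if hj : j ∈ support a b then coord j (f.app j (mk hj 1)) else 0
  have hc : ∀ j (hj : j ∈ support a b) (w : (Sab k a b).obj j), f.app j w = c j • w := by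
    intro j hj w
    rw [← coord_smul_mk_one hj w, map_smul]
    refine coord_injective j ?_
    simp [c, dif_pos hj, mul_comm]
  have hstep : ∀ i, i ∈ support a b → i + 1 ∈ support a b → c (i + 1) = c i := by
    intro i hi hi'
    have hd : (Sab k a b).d i (mk hi 1) ≠ 0 := fun h0 => by
      have := congrArg (coord (i + 1)) h0
      rw [coord_d_of_mem hi', coord_mk, mul_one, map_zero] at this
      exact zpow_ne_zero i (neg_ne_zero.2 one_ne_zero) this
    refine smul_left_injective k hd ?_
    have := NatTrans.naturality_apply f (homOfLE (Int.le_add_one le_rfl)) (mk hi (1 : k))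
    dsimp only
    rw [← hc _ hi', SeqCat.d_apply, this, hc _ hi, map_smul]
  obtain ⟨i₀, hi₀⟩ := h
  have hconst : ∀ j, j ∈ support a b → c j = c i₀ := by
    intro j hj
    rcases le_total i₀ j with hij | hji
    · induction j, hij using Int.leInduction with
      | base => rfl
      | succ j hij ih =>
        have hj' := mem_support_of_le_of_le hi₀ hj hij (Int.le_add_one le_rfl)
        rw [hstep j hj' hj, ih hj']
    · induction j, hji using Int.leInductionDown with
      | base => rfl
      | pred j hji ih =>
        have hj' := mem_support_of_le_of_le hj hi₀ (by omega) hji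
        rw [← hstep (j - 1) hj (by simpa using hj'), sub_add_cancel, ih hj']
  exact ⟨c i₀, fun j w => if hj : j ∈ support a b then by rw [hc j hj, hconst j hj]
    else by rw [eq_zero_of_notMem hj w, map_zero, smul_zero]⟩

theorem eq_zero_or_eq_id_of_idem (h : SabLE a b) (e : Sab k a b ⟶ Sab k a b) (he : e ≫ e = e) :
    e = 0 ∨ e = 𝟙 _ := by
  obtain ⟨c, hc⟩ := exists_app_eq_smul h e
  obtain ⟨i, hi⟩ : ∃ i, i ∈ support a b := h
  have hcc : IsIdempotentElem c :=
    calc c * c = coord i ((e ≫ e).app i (mk hi 1)) := by simp [hc]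
      _ = c := by simp [he, hc]
  rcases IsIdempotentElem.iff_eq_zero_or_one.1 hcc with rfl | rfl
  · left
    ext j w
    simp [hc]
  · right
    ext j w
    simp [hc]

theorem indecomposable (h : SabLE a b) : IndecomposableSeq k (Sab k a b) :=
  ⟨not_isZero h, fun A B ⟨φ⟩ => isZero_or_isZero_of_iso_biprod (eq_zero_or_eq_id_of_idem h)
    (φ ≪≫ (biprod.isoCoprod A B).symm)⟩

/-- `sign j = (-1)^(j(j-1)/2)`, chosen so that `sign (j+1) = (-1)^j * sign j`: rescaling degree `j`
by `sign j` turns the transition maps `(-1)^j` of `S_{a,b}` into identities. -/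
noncomputable def sign (j : ℤ) : k := (-1) ^ (j * (j - 1) / 2)

theorem sign_add_one (j : ℤ) : sign (j + 1) = (-1 : k) ^ j * sign j := by
  have h : (j + 1) * (j + 1 - 1) = j * (j - 1) + j * 2 := by ring
  rw [sign, sign, h, Int.add_mul_ediv_right _ _ two_ne_zero, zpow_add₀ (by norm_num), mul_comm]

theorem sign_mul_self (j : ℤ) : sign j * sign j = (1 : k) := by
  rw [sign, ← mul_zpow, neg_one_mul, neg_neg, one_zpow]

theorem neg_one_zpow_mul_sign_add_one (j : ℤ) : (-1 : k) ^ j * sign (j + 1) = sign j := by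
  rw [sign_add_one, ← mul_assoc, ← mul_zpow, neg_one_mul, neg_neg, one_zpow, one_mul]

/-- Vectors `x j` and functionals `ev j` on the support of `S_{a,b}` inducing morphisms
`S_{a,b} ⟶ V ⟶ S_{a,b}` whose composite is the identity. -/
structure SplitData (V : SeqCat k) (a : WithBot ℤ) (b : WithTop ℤ) where
  x : ∀ j, V.obj j
  ev : ∀ j, V.obj j →ₗ[k] k
  d_x : ∀ i, i ∈ support a b → i + 1 ∈ support a b → V.d i (x i) = x (i + 1)
  d_x_eq_zero : ∀ i, i ∈ support a b → i + 1 ∉ support a b → V.d i (x i) = 0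
  ev_x : ∀ j, j ∈ support a b → ev j (x j) = 1
  ev_d : ∀ i, i ∈ support a b → i + 1 ∈ support a b → ∀ v, ev (i + 1) (V.d i v) = ev i v
  ev_d_eq_zero : ∀ i, i ∉ support a b → i + 1 ∈ support a b → ∀ v, ev (i + 1) (V.d i v) = 0

namespace SplitData

variable {V : SeqCat k} (D : SplitData V a b)

noncomputable def inclApp (j : ℤ) : (Sab k a b).obj j →ₗ[k] V.obj j :=
  (coord j).smulRight ((sign j : k) • D.x j)

noncomputable def retrApp (j : ℤ) : V.obj j →ₗ[k] (Sab k a b).obj j :=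
  if h : j ∈ support a b then Sab.mk h ∘ₗ ((sign j : k) • D.ev j) else 0

theorem inclApp_apply (j : ℤ) (w : (Sab k a b).obj j) :
    D.inclApp j w = coord j w • (sign j : k) • D.x j :=
  rfl

theorem coord_retrApp {j : ℤ} (h : j ∈ support a b) (v : V.obj j) :
    coord j (D.retrApp j v) = sign j * D.ev j v := by
  simp [retrApp, dif_pos h]

theorem retrApp_of_notMem {j : ℤ} (h : j ∉ support a b) : D.retrApp j = 0 :=
  dif_neg h

noncomputable def incl : Sab k a b ⟶ V :=
  SeqCat.homMk (fun j => ModuleCat.ofHom (D.inclApp j)) fun i => by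
    ext w
    change D.inclApp (i + 1) ((Sab k a b).d i w) = V.d i (D.inclApp i w)
    rw [inclApp_apply, inclApp_apply]
    by_cases hi : i ∈ support a b
    · by_cases hi' : i + 1 ∈ support a b
      · rw [coord_d_of_mem hi', map_smul, map_smul, D.d_x i hi hi', smul_smul, smul_smul,
          ← neg_one_zpow_mul_sign_add_one i, mul_left_comm, mul_assoc]
      · rw [d_eq_zero_of_notMem hi', map_zero, zero_smul, map_smul, map_smul,
          D.d_x_eq_zero i hi hi', smul_zero, smul_zero]
    · simp [eq_zero_of_notMem hi w]

noncomputable def retr : V ⟶ Sab k a b :=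
  SeqCat.homMk (fun j => ModuleCat.ofHom (D.retrApp j)) fun i => by
    ext v
    change D.retrApp (i + 1) (V.d i v) = (Sab k a b).d i (D.retrApp i v)
    by_cases hi' : i + 1 ∈ support a b
    · refine coord_injective _ ?_
      rw [coord_d_of_mem hi', coord_retrApp D hi']
      by_cases hi : i ∈ support a b
      · rw [coord_retrApp D hi, D.ev_d i hi hi', sign_add_one, mul_assoc]
      · rw [retrApp_of_notMem D hi, D.ev_d_eq_zero i hi hi', LinearMap.zero_apply, map_zero,
          mul_zero, mul_zero]
    · rw [retrApp_of_notMem D hi', d_eq_zero_of_notMem hi', LinearMap.zero_apply]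

theorem incl_retr : D.incl ≫ D.retr = 𝟙 _ := by
  ext j w
  change D.retrApp j (D.inclApp j w) = w
  by_cases hj : j ∈ support a b
  · refine coord_injective _ ?_
    rw [coord_retrApp D hj, inclApp_apply, map_smul, map_smul, D.ev_x j hj, smul_eq_mul,
      smul_eq_mul, mul_one, mul_left_comm, sign_mul_self, mul_one]
  · rw [eq_zero_of_notMem hj w, map_zero, map_zero]

theorem nonempty_iso_coprod (D : SplitData V a b) :
    ∃ B : SeqCat k, Nonempty (V ≅ Sab k a b ⨿ B) :=
  have : IsSplitMono D.incl := IsSplitMono.mk' ⟨D.retr, D.incl_retr⟩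
  ⟨_, nonempty_iso_coprod_cokernel_of_isSplitMono D.incl⟩

end SplitData

end Sab

namespace SeqCat

variable {k} {V : SeqCat k}

open Sab

theorem exists_splitData_of_d_eq_zero_of_notMem_range {p i : ℤ} {y : V.obj p}
    (hy : V.d p y = 0) (hip : i ≤ p) (hyi : y ∉ LinearMap.range (V.map (homOfLE hip)).hom) :
    ∃ (a : WithBot ℤ) (b : WithTop ℤ), SabLE a b ∧ Nonempty (SplitData V a b) := by
  obtain ⟨m, ⟨hmp, hym⟩, hmax⟩ := Int.exists_greatest_of_bdd
    (P := fun m => ∃ h : m ≤ p, y ∉ LinearMap.range (V.map (homOfLE h)).hom)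
    ⟨p, fun m ⟨h, _⟩ => h⟩ ⟨i, hip, hyi⟩
  have hmp' : m + 1 ≤ p := by
    refine lt_of_le_of_ne hmp fun h => ?_
    subst h
    exact hym ⟨y, map_self_apply V _ y⟩
  obtain ⟨z, hz⟩ : ∃ z, V.map (homOfLE hmp') z = y := by
    by_contra hz
    exact absurd (hmax (m + 1) ⟨hmp', fun ⟨z, hz'⟩ => hz ⟨z, hz'⟩⟩) (by omega)
  obtain ⟨φ, hφy, hφ⟩ := LinearMap.exists_eq_one_and_eq_zero_of_notMem hym
  refine ⟨(m + 1 : ℤ), p, ⟨m + 1, le_rfl, by exact_mod_cast hmp'⟩, ⟨{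
    x := fun j => if h : m + 1 ≤ j then V.map (homOfLE h) z else 0
    ev := fun j => if h : j ≤ p then φ ∘ₗ ConcreteCategory.hom (V.map (homOfLE h)) else 0
    d_x := fun i hi hi' => ?_
    d_x_eq_zero := fun i hi hi' => ?_
    ev_x := fun j hj => ?_
    ev_d := fun i hi hi' v => ?_
    ev_d_eq_zero := fun i hi hi' v => ?_ }⟩⟩
  all_goals simp only [mem_support_iff, WithBot.coe_le_coe, WithTop.coe_le_coe, not_and_or,
      not_le] at *
  · rw [dif_pos hi.1, dif_pos hi'.1, d_apply, map_map_apply]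
  · obtain rfl : i = p := by omega
    rw [dif_pos hi.1, hz, hy]
  · rw [dif_pos hj.1, dif_pos hj.2, LinearMap.comp_apply, map_map_apply, hz, hφy]
  · rw [dif_pos hi'.2, dif_pos hi.2, LinearMap.comp_apply, LinearMap.comp_apply, d_apply,
      map_map_apply]
  · obtain rfl : i = m := by omega
    rw [dif_pos hi'.2, LinearMap.comp_apply, d_apply, map_map_apply]
    exact hφ _ ⟨v, rfl⟩

/-- Steps are written `V.map (homOfLE hij)` with `i + 1 = j` rather than `V.d i`, so that lifting
from degree `n` to degree `n - 1` needs no transport between `V.obj (n - 1 + 1)` and `V.obj n`. -/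
theorem exists_family_map_eq_of_forall_exists (T : ∀ j, Set (V.obj j)) {p : ℤ} {y : V.obj p}
    (hy : y ∈ T p) (hT : ∀ i j (hij : i ≤ j), i + 1 = j → j ≤ p → ∀ v ∈ T j,
      ∃ u ∈ T i, V.map (homOfLE hij) u = v) :
    ∃ x : ∀ j, V.obj j, x p = y ∧ ∀ i j (hij : i ≤ j), j ≤ p → V.map (homOfLE hij) (x i) = x j := by
  choose g hgT hg using fun n (hn : n ≤ p) => hT (n - 1) n (by omega) (by omega) hn
  let c : ∀ j, j ≤ p → T j := fun j hj => Int.leInductionDown (motive := fun j _ => T j)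
    ⟨y, hy⟩ (fun n hn v => ⟨g n hn v v.2, hgT n hn v v.2⟩) j hj
  let x : ∀ j, V.obj j := fun j => if h : j ≤ p then c j h else 0
  have hstep : ∀ n (hn : n ≤ p), V.map (homOfLE (by omega : n - 1 ≤ n)) (x (n - 1)) = x n := by
    intro n hn
    simp only [x, c, dif_pos hn, dif_pos (show n - 1 ≤ p by omega)]
    rw [Int.leInductionDown_sub_one (motive := fun j _ => T j) _ _ n hn]
    exact hg n hn _ _
  refine ⟨x, by simp [x, c, Int.leInductionDown_base], fun i j hij hjp => ?_⟩
  induction i, hij using Int.leInductionDown with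
  | base => exact map_self_apply V _ _
  | pred i hij ih =>
    rw [← map_map_apply V (by omega : i - 1 ≤ i) hij, hstep i (hij.trans hjp), ih]

theorem exists_splitData_of_forall_map_eq_zero_mem_range {p : ℤ} {y : V.obj p} (hy0 : y ≠ 0)
    (hy : V.d p y = 0) (hdiv : ∀ i j (hij : i ≤ j), i + 1 = j → ∀ u : V.obj i,
      V.map (homOfLE hij) u = 0 → ∀ m (hm : m ≤ i), u ∈ LinearMap.range (V.map (homOfLE hm)).hom) :
    ∃ (a : WithBot ℤ) (b : WithTop ℤ), SabLE a b ∧ Nonempty (SplitData V a b) := by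
  let divisible : ∀ j, Set (V.obj j) := fun j =>
    {v | ∀ m (hm : m ≤ j), v ∈ LinearMap.range (V.map (homOfLE hm)).hom}
  have hy_div : y ∈ divisible p := fun m hm => by
    rcases hm.lt_or_eq with hm | rfl
    · exact hdiv p (p + 1) (by omega) rfl y hy m (by omega)
    · exact ⟨y, map_self_apply V _ y⟩
  -- A preimage `u₀` of `v` is again divisible: it differs from the image of any lift of `v` from
  -- degree `m` by an element killed by the step map, which `hdiv` lifts to degree `m`.
  have hlift : ∀ i j (hij : i ≤ j), i + 1 = j → j ≤ p → ∀ v ∈ divisible j,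
      ∃ u ∈ divisible i, V.map (homOfLE hij) u = v := by
    intro i j hij e _ v hv
    obtain ⟨u₀, hu₀⟩ := hv i hij
    refine ⟨u₀, fun m hm => ?_, hu₀⟩
    obtain ⟨w, hw⟩ := hv m (hm.trans hij)
    have hκ : V.map (homOfLE hij) (u₀ - V.map (homOfLE hm) w) = 0 := by
      rw [map_sub, map_map_apply]
      exact sub_eq_zero.2 (hu₀.trans hw.symm)
    obtain ⟨u', hu'⟩ := hdiv i j hij e _ hκ m hm
    exact ⟨u' + w, by rw [map_add]; exact (eq_sub_iff_add_eq.1 hu')⟩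
  obtain ⟨x, hxp, hx⟩ := exists_family_map_eq_of_forall_exists divisible hy_div hlift
  obtain ⟨φ, hφy, -⟩ := LinearMap.exists_eq_one_and_eq_zero_of_notMem
    (p := (⊥ : Submodule k (V.obj p))) (by simpa using hy0)
  refine ⟨⊥, p, ⟨p, by simp⟩, ⟨{
    x := x
    ev := fun j => if h : j ≤ p then φ ∘ₗ ConcreteCategory.hom (V.map (homOfLE h)) else 0
    d_x := fun i hi hi' => ?_
    d_x_eq_zero := fun i hi hi' => ?_
    ev_x := fun j hj => ?_
    ev_d := fun i hi hi' v => ?_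
    ev_d_eq_zero := fun i hi hi' v => ?_ }⟩⟩
  all_goals simp only [mem_support_iff, WithTop.coe_le_coe, bot_le, true_and, not_le] at *
  · exact hx i (i + 1) _ hi'
  · obtain rfl : i = p := by omega
    rwa [hxp]
  · rw [dif_pos hj, LinearMap.comp_apply, hx j p hj le_rfl, hxp, hφy]
  · rw [dif_pos hi', dif_pos hi, LinearMap.comp_apply, LinearMap.comp_apply, d_apply,
      map_map_apply]
  · omega

variable (V)

noncomputable abbrev transition (i j : ℤ) (h : i ≤ j) : V.obj i →ₗ[k] V.obj j :=
  ConcreteCategory.hom (V.map (homOfLE h))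

instance : DirectedSystem (fun j => V.obj j) fun i j h => V.transition i j h where
  map_self _ v := map_self_apply V _ v
  map_map _ _ _ hij hjk v := map_map_apply V hij hjk v

abbrev colim : Type _ := Module.DirectLimit (fun j => V.obj j) V.transition

noncomputable def toColim (j : ℤ) : V.obj j →ₗ[k] V.colim :=
  Module.DirectLimit.of k ℤ (fun j => V.obj j) V.transition j

variable {V}

theorem toColim_map {i j : ℤ} (hij : i ≤ j) (v : V.obj i) :
    V.toColim j (V.map (homOfLE hij) v) = V.toColim i v :=
  Module.DirectLimit.of_f

theorem exists_toColim_eq (c : V.colim) : ∃ i v, V.toColim i v = c :=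
  Module.DirectLimit.exists_of c

theorem toColim_injective (hV : ∀ i, Function.Injective (V.d i)) (j : ℤ) :
    Function.Injective (V.toColim j) := by
  refine (injective_iff_map_eq_zero _).2 fun v hv => ?_
  obtain ⟨l, hjl, hl⟩ := Module.DirectLimit.of.zero_exact hv
  induction l, hjl using Int.leInduction with
  | base => simpa [map_self_apply] using hl
  | succ l hjl ih =>
    refine ih (hV l ?_)
    rw [map_zero, d_apply, map_map_apply]
    exact hl

theorem exists_splitData_of_toColim_notMem_range (hV : ∀ i, Function.Injective (V.d i)) {n : ℤ}
    {z : V.obj (n + 1)} (hz : V.toColim (n + 1) z ∉ LinearMap.range (V.toColim n)) :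
    ∃ (a : WithBot ℤ) (b : WithTop ℤ), SabLE a b ∧ Nonempty (SplitData V a b) := by
  obtain ⟨Λ, hΛz, hΛ⟩ := LinearMap.exists_eq_one_and_eq_zero_of_notMem hz
  refine ⟨(n + 1 : ℤ), ⊤, ⟨n + 1, by simp⟩, ⟨{
    x := fun j => if h : n + 1 ≤ j then V.map (homOfLE h) z else 0
    ev := fun j => Λ ∘ₗ V.toColim j
    d_x := fun i hi hi' => ?_
    d_x_eq_zero := fun i hi hi' => ?_
    ev_x := fun j hj => ?_
    ev_d := fun i hi hi' v => ?_
    ev_d_eq_zero := fun i hi hi' v => ?_ }⟩⟩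
  all_goals simp only [mem_support_iff, WithBot.coe_le_coe, le_top, and_true, not_le] at *
  · rw [dif_pos hi, dif_pos hi', d_apply, map_map_apply]
  · exact absurd hi' (by omega)
  · rw [dif_pos hj, LinearMap.comp_apply, toColim_map, hΛz]
  · rw [LinearMap.comp_apply, LinearMap.comp_apply, d_apply, toColim_map]
  · obtain rfl : i = n := by omega
    rw [LinearMap.comp_apply, d_apply, toColim_map]
    exact hΛ _ ⟨v, rfl⟩

theorem exists_splitData_of_toColim_mem_range (hV : ∀ i, Function.Injective (V.d i))
    (hrange : ∀ n (z : V.obj (n + 1)), V.toColim (n + 1) z ∈ LinearMap.range (V.toColim n))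
    {i₀ : ℤ} {v₀ : V.obj i₀} (hv₀ : v₀ ≠ 0) :
    ∃ (a : WithBot ℤ) (b : WithTop ℤ), SabLE a b ∧ Nonempty (SplitData V a b) := by
  have hsurj : ∀ j, Function.Surjective (V.toColim j) := by
    intro j c
    obtain ⟨i, v, rfl⟩ := exists_toColim_eq c
    rcases le_total i j with hij | hji
    · exact ⟨_, toColim_map hij v⟩
    · induction i, hji using Int.leInduction with
      | base => exact ⟨v, rfl⟩
      | succ i hji ih =>
        obtain ⟨u, hu⟩ := hrange i v
        rw [← hu]
        exact ih u
  let c := V.toColim i₀ v₀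
  have hc : c ∉ (⊥ : Submodule k V.colim) := by
    simpa [c] using (map_ne_zero_iff _ (toColim_injective hV i₀)).2 hv₀
  obtain ⟨Λ, hΛc, -⟩ := LinearMap.exists_eq_one_and_eq_zero_of_notMem hc
  have hx := fun j => Function.surjInv_eq (hsurj j) c
  refine ⟨⊥, ⊤, ⟨0, by simp⟩, ⟨{
    x := fun j => Function.surjInv (hsurj j) c
    ev := fun j => Λ ∘ₗ V.toColim j
    d_x := fun i _ _ => toColim_injective hV (i + 1) ?_
    d_x_eq_zero := fun i _ hi' => absurd (by simp [mem_support_iff]) hi'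
    ev_x := fun j _ => by rw [LinearMap.comp_apply, hx, hΛc]
    ev_d := fun i _ _ v => by rw [LinearMap.comp_apply, LinearMap.comp_apply, d_apply, toColim_map]
    ev_d_eq_zero := fun i hi _ _ => absurd (by simp [mem_support_iff]) hi }⟩⟩
  rw [d_apply, toColim_map, hx, hx]

theorem exists_splitData (hV : ¬ IsZero V) :
    ∃ (a : WithBot ℤ) (b : WithTop ℤ), SabLE a b ∧ Nonempty (SplitData V a b) := by
  obtain ⟨i₀, v₀, hv₀⟩ : ∃ (i : ℤ) (v : V.obj i), v ≠ 0 := by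
    by_contra! h
    refine hV (Functor.isZero _ fun i => ModuleCat.isZero_iff_subsingleton.2 ?_)
    exact ⟨fun v w => (h i v).trans (h i w).symm⟩
  by_cases hI : ∃ (p i : ℤ) (y : V.obj p) (hip : i ≤ p),
      V.d p y = 0 ∧ y ∉ LinearMap.range (V.map (homOfLE hip)).hom
  · obtain ⟨p, i, y, hip, hy, hyi⟩ := hI
    exact exists_splitData_of_d_eq_zero_of_notMem_range hy hip hyi
  push Not at hI
  by_cases hK : ∃ (p : ℤ) (y : V.obj p), y ≠ 0 ∧ V.d p y = 0
  · obtain ⟨p, y, hy0, hy⟩ := hK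
    refine exists_splitData_of_forall_map_eq_zero_mem_range hy0 hy ?_
    rintro i _ hij rfl u hu m hm
    exact hI i m u hm hu
  push Not at hK
  have hinj : ∀ i, Function.Injective (V.d i) := fun i =>
    (injective_iff_map_eq_zero _).2 fun v hv => by_contra fun h => hK i v h hv
  by_cases hS : ∃ (n : ℤ) (z : V.obj (n + 1)), V.toColim (n + 1) z ∉ LinearMap.range (V.toColim n)
  · obtain ⟨n, z, hz⟩ := hS
    exact exists_splitData_of_toColim_notMem_range hinj hz
  · push Not at hS
    exact exists_splitData_of_toColim_mem_range hinj hS hv₀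

theorem indecomposableSeq_iff (V : SeqCat k) : IndecomposableSeq k V ↔
    ∃ (a : WithBot ℤ) (b : WithTop ℤ), SabLE a b ∧ Nonempty (V ≅ Sab k a b) := by
  constructor
  · rintro ⟨hV, hdec⟩
    obtain ⟨a, b, hab, ⟨D⟩⟩ := exists_splitData hV
    obtain ⟨B, ⟨e⟩⟩ := D.nonempty_iso_coprod
    have hB : IsZero B := (hdec _ _ ⟨e⟩).resolve_left (Sab.not_isZero hab)
    exact ⟨a, b, hab, ⟨e ≪≫ coprod.mapIso (Iso.refl _) hB.isoZero ≪≫ coprodZeroIso _⟩⟩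
  · rintro ⟨a, b, hab, ⟨e⟩⟩
    exact ⟨fun hz => Sab.not_isZero hab (hz.of_iso e.symm),
      fun A B ⟨e'⟩ => (Sab.indecomposable hab).2 A B ⟨e.symm ≪≫ e'⟩⟩

end SeqCat

/-- An object `V` of `S` is indecomposable if and only if `V ≅ S_{a,b}` for some
`a ∈ ℤ ∪ {−∞}` and `b ∈ ℤ ∪ {∞}` with `a ≤ b`; and `V` is completely decomposable if
and only if `V` is isomorphic to a coproduct of objects of the form `S_{a,b}`. -/
theorem indecomposable_and_completely_decomposable_char (V : SeqCat k) :
    (IndecomposableSeq k V ↔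
      ∃ (a : WithBot ℤ) (b : WithTop ℤ), SabLE a b ∧ Nonempty (V ≅ Sab k a b)) ∧
    (CompletelyDecomposableSeq k V ↔
      ∃ (ι : Type) (a : ι → WithBot ℤ) (b : ι → WithTop ℤ),
        (∀ j, SabLE (a j) (b j)) ∧
        Nonempty (V ≅ ∐ fun j : ι => Sab k (a j) (b j))) := by
  refine ⟨SeqCat.indecomposableSeq_iff V, ⟨?_, ?_⟩⟩
  · rintro ⟨ι, W, hW, ⟨e⟩⟩
    choose a b hab hiso using fun j => (SeqCat.indecomposableSeq_iff (W j)).1 (hW j)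
    exact ⟨ι, a, b, hab, ⟨e ≪≫ Sigma.mapIso fun j => (hiso j).some⟩⟩
  · rintro ⟨ι, a, b, hab, e⟩
    exact ⟨ι, _, fun j => Sab.indecomposable (hab j), e⟩
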